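/- For every C₀ < ∞ and M < ∞ there exists a constant C < ∞, depending only on C₀, M, K, T, γ, d and the Lebesgue measure of O, with the following property: whenever x : O → ℝ is measurable with sup_{r∈O}|x(r)| ≤ C₀, u ∈ L²([0,T]×O) satisfies ∫_{[0,T]×O} u² ≤ M, and f : [0,T]×O → ℝ is a bounded measurable function solving (CE) with data (x,u), then sup_{(t,r)∈[0,T]×O} |f(t,r)| ≤ C. -/

import Mathlib

open MeasureTheory Filter Set Topology
open scoped ENNReal NNReal

noncomputable section

/-- Euclidean space `ℝ^d`. -/
abbrev Euc (d : ℕ) := EuclideanSpace ℝ (Fin d)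

/-- `u ∈ L²([0,T] × O)`. -/
def MemL2 {d : ℕ} (O : Set (Euc d)) (T : ℝ) (u : ℝ → Euc d → ℝ) : Prop :=
  MemLp (fun p : ℝ × Euc d => u p.1 p.2) 2
    (((volume : Measure ℝ).restrict (Icc (0:ℝ) T)).prod
      ((volume : Measure (Euc d)).restrict O))

/-- `∫_{[0,T]×O} u²`, as an extended real. -/
def energy {d : ℕ} (O : Set (Euc d)) (T : ℝ) (u : ℝ → Euc d → ℝ) : ℝ≥0∞ :=
  ∫⁻ s in Icc (0:ℝ) T, ∫⁻ q in O, (‖u s q‖₊ : ℝ≥0∞) ^ 2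

/-- `f` solves the controlled equation (CE) with data `(x, u)` on `[0,T] × O`. -/
def SolvesCE {d : ℕ} (O : Set (Euc d)) (T : ℝ)
    (G : ℝ → ℝ → Euc d → Euc d → ℝ) (R F : ℝ → Euc d → ℝ → ℝ)
    (x : Euc d → ℝ) (u : ℝ → Euc d → ℝ) (f : ℝ → Euc d → ℝ) : Prop :=
  ∀ t ∈ Icc (0:ℝ) T, ∀ r ∈ O,
    f t r = (∫ q in O, G t 0 r q * x q) +
      (∫ s in Icc (0:ℝ) t, ∫ q in O, G t s r q * R s q (f s q)) +
      (∫ s in Icc (0:ℝ) t, ∫ q in O, G t s r q * F s q (f s q) * u s q)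

/-!
Put `ψ(s) = 1 + sup_{q ∈ O} |f(s,q)|` (`sliceSup`) and `Ψ(t) = sup_{0 ≤ s ≤ t} ψ(s)²`
(`runningSqSup`); `Ψ` is finite because `f` is bounded. Estimating the three terms of (CE) with
(G1), the linear growth of `R, F` and Cauchy–Schwarz against `u` gives
`ψ(t)² ≲ 1 + ∫₀ᵗ Ψ + M ∫₀ᵗ Ψ(s) (t - s)^(-d/γ) ds`,
where the singularity enters only through `|G|² ≤ K (t - s)^(-d/γ) |G|` and `∫_O |G| ≤ K`.
As `d/γ < 1`, cutting the last integral at `t - δ` bounds it by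
`δ^(-d/γ) ∫₀ᵗ Ψ + δ^(1 - d/γ) / (1 - d/γ) · Ψ(t)`; for `δ` small the `Ψ(t)` term is absorbed
into the left-hand side, and Gronwall's lemma bounds `Ψ` in terms of `C₀, M, K, T, d/γ` only.
-/

lemma add_add_sq_le_three_mul (a b c : ℝ≥0∞) : (a + b + c) ^ 2 ≤ 3 * (a ^ 2 + b ^ 2 + c ^ 2) := by
  induction a <;> induction b <;> induction c <;> try simp [ENNReal.mul_top]
  norm_cast
  simpa [Fin.sum_univ_three] using sq_sum_le_card_mul_sum_sq (s := Finset.univ) (f := ![_, _, _])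

lemma abs_le_sqrt_toReal_of_enorm_sq_le {y : ℝ} {Z : ℝ≥0∞} (hZ : Z ≠ ∞) (h : ‖y‖ₑ ^ 2 ≤ Z) :
    |y| ≤ √Z.toReal := by
  rw [Real.enorm_eq_ofReal_abs, ← ENNReal.ofReal_pow (abs_nonneg y),
    ENNReal.ofReal_le_iff_le_toReal hZ, sq_abs] at h
  exact Real.abs_le_sqrt h

lemma ENNReal.rpow_inv_two_sq (x : ℝ≥0∞) : (x ^ (2⁻¹ : ℝ)) ^ 2 = x := by
  simpa using ENNReal.rpow_inv_natCast_pow two_ne_zero x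

section CauchySchwarz

variable {X Y : Type*} [MeasurableSpace X] [MeasurableSpace Y]

lemma lintegral_mul_sq_le (μ : Measure X) {f g : X → ℝ≥0∞} (hf : AEMeasurable f μ)
    (hg : AEMeasurable g μ) :
    (∫⁻ x, f x * g x ∂μ) ^ 2 ≤ (∫⁻ x, f x ^ 2 ∂μ) * ∫⁻ x, g x ^ 2 ∂μ := by
  have h := ENNReal.lintegral_mul_le_Lp_mul_Lq μ Real.HolderConjugate.two_two hf hg
  simp only [Pi.mul_apply, ENNReal.rpow_two] at h
  calc (∫⁻ x, f x * g x ∂μ) ^ 2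
      ≤ ((∫⁻ x, f x ^ 2 ∂μ) ^ (1 / 2 : ℝ) * (∫⁻ x, g x ^ 2 ∂μ) ^ (1 / 2 : ℝ)) ^ 2 := by gcongr
    _ = (∫⁻ x, f x ^ 2 ∂μ) * ∫⁻ x, g x ^ 2 ∂μ := by
      rw [mul_pow, ← ENNReal.rpow_two, ← ENNReal.rpow_two, one_div,
        ENNReal.rpow_inv_rpow two_ne_zero, ENNReal.rpow_inv_rpow two_ne_zero]

lemma sq_lintegral_le_measure_univ_mul (μ : Measure X) {f : X → ℝ≥0∞} (hf : AEMeasurable f μ) :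
    (∫⁻ x, f x ∂μ) ^ 2 ≤ μ univ * ∫⁻ x, f x ^ 2 ∂μ := by
  simpa [mul_comm] using lintegral_mul_sq_le μ hf aemeasurable_const (g := fun _ => 1)

lemma enorm_integral_integral_mul_sq_le {μ : Measure X} {ν : Measure Y} [SFinite μ] [SFinite ν]
    {g h : X → Y → ℝ} (hg : AEMeasurable (fun p : X × Y => ‖g p.1 p.2‖ₑ) (μ.prod ν))
    (hh : AEMeasurable (fun p : X × Y => ‖h p.1 p.2‖ₑ) (μ.prod ν)) :
    ‖∫ x, ∫ y, g x y * h x y ∂ν ∂μ‖ₑ ^ 2 ≤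
      (∫⁻ x, ∫⁻ y, ‖g x y‖ₑ ^ 2 ∂ν ∂μ) * ∫⁻ x, ∫⁻ y, ‖h x y‖ₑ ^ 2 ∂ν ∂μ := by
  have hint : ‖∫ x, ∫ y, g x y * h x y ∂ν ∂μ‖ₑ ≤
      ∫⁻ p, ‖g p.1 p.2‖ₑ * ‖h p.1 p.2‖ₑ ∂μ.prod ν := by
    refine (enorm_integral_le_lintegral_enorm _).trans ?_
    rw [lintegral_prod (fun p => ‖g p.1 p.2‖ₑ * ‖h p.1 p.2‖ₑ) (hg.mul hh)]
    refine lintegral_mono fun x => (enorm_integral_le_lintegral_enorm _).trans_eq ?_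
    simp only [enorm_mul]
  rw [lintegral_lintegral (hg.pow_const 2), lintegral_lintegral (hh.pow_const 2)]
  exact (pow_le_pow_left' hint 2).trans (lintegral_mul_sq_le _ hg hh)

end CauchySchwarz

lemma enorm_setIntegral_mul_le {X : Type*} [MeasurableSpace X] {μ : Measure X} {s : Set X}
    (hs : MeasurableSet s) {g h : X → ℝ} {c : ℝ≥0∞} (hg : Measurable g)
    (hh : ∀ x ∈ s, ‖h x‖ₑ ≤ c) :
    ‖∫ x in s, g x * h x ∂μ‖ₑ ≤ (∫⁻ x in s, ‖g x‖ₑ ∂μ) * c := by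
  refine (enorm_integral_le_lintegral_enorm _).trans ?_
  rw [← lintegral_mul_const _ hg.enorm]
  refine setLIntegral_mono' hs fun x hx => ?_
  rw [enorm_mul]
  gcongr
  exact hh x hx

lemma setLIntegral_sq_mul_le {X : Type*} [MeasurableSpace X] {μ : Measure X} {s : Set X}
    (hs : MeasurableSet s) {g h : X → ℝ≥0∞} {A c : ℝ≥0∞} (hg : Measurable g)
    (hgA : ∀ x ∈ s, g x ≤ A) (hh : ∀ x ∈ s, h x ≤ c) :
    ∫⁻ x in s, (g x * h x) ^ 2 ∂μ ≤ A * (∫⁻ x in s, g x ∂μ) * c ^ 2 := by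
  rw [← lintegral_const_mul _ hg, ← lintegral_mul_const _ (hg.const_mul A)]
  refine setLIntegral_mono' hs fun x hx => ?_
  calc (g x * h x) ^ 2 = g x * g x * h x ^ 2 := by ring
    _ ≤ A * g x * c ^ 2 := by gcongr <;> simp [hgA x hx, hh x hx]

lemma setLIntegral_Icc_ofReal_eq_sub {g F : ℝ → ℝ} {a b : ℝ} (hab : a ≤ b) (hg : Continuous g)
    (hg0 : ∀ s ∈ Icc a b, 0 ≤ g s) (hF : ∀ s, HasDerivAt F (g s) s) :
    ∫⁻ s in Icc a b, ENNReal.ofReal (g s) = ENNReal.ofReal (F b - F a) := by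
  rw [← ofReal_integral_eq_lintegral_ofReal hg.integrableOn_Icc
      ((ae_restrict_iff' measurableSet_Icc).2 (ae_of_all _ hg0)),
    integral_Icc_eq_integral_Ioc, ← intervalIntegral.integral_of_le hab,
    intervalIntegral.integral_eq_sub_of_hasDerivAt (fun s _ => hF s) (hg.intervalIntegrable a b)]

lemma setLIntegral_Icc_rpow_neg_sub {α a t : ℝ} (hα : α < 1) (hat : a ≤ t) :
    ∫⁻ s in Icc a t, ENNReal.ofReal ((t - s) ^ (-α)) =
      ENNReal.ofReal ((t - a) ^ (1 - α) / (1 - α)) := by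
  have hα' : -1 < -α := by linarith
  have hint : IntegrableOn (fun s => (t - s) ^ (-α)) (Icc a t) := by
    rw [integrableOn_Icc_iff_integrableOn_Ioc,
      ← intervalIntegrable_iff_integrableOn_Ioc_of_le hat]
    simpa using
      (intervalIntegral.intervalIntegrable_rpow' hα' (a := t - a) (b := t - t)).comp_sub_left t
  rw [← ofReal_integral_eq_lintegral_ofReal hint ((ae_restrict_iff' measurableSet_Icc).2
    (ae_of_all _ fun s hs => Real.rpow_nonneg (sub_nonneg.2 hs.2) _)),
    integral_Icc_eq_integral_Ioc, ← intervalIntegral.integral_of_le hat,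
    intervalIntegral.integral_comp_sub_left (fun s => s ^ (-α)) t, sub_self,
    integral_rpow (Or.inl hα'), Real.zero_rpow (by linarith), neg_add_eq_sub]
  ring_nf

lemma setLIntegral_mul_rpow_neg_sub_le {Ψ : ℝ → ℝ≥0∞} (hΨ : Monotone Ψ) {α δ : ℝ} (hα0 : 0 ≤ α)
    (hα1 : α < 1) (hδ : 0 < δ) (a t : ℝ) :
    ∫⁻ s in Icc a t, Ψ s * ENNReal.ofReal ((t - s) ^ (-α)) ≤
      ENNReal.ofReal (δ ^ (-α)) * (∫⁻ s in Icc a t, Ψ s) +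
        ENNReal.ofReal (δ ^ (1 - α) / (1 - α)) * Ψ t := by
  have hsplit : Icc a t ⊆ Icc a (t - δ) ∪ Icc (t - δ) t := fun s hs => by
    rcases le_total s (t - δ) with h | h
    exacts [Or.inl ⟨hs.1, h⟩, Or.inr ⟨h, hs.2⟩]
  have hfar : ∫⁻ s in Icc a (t - δ), Ψ s * ENNReal.ofReal ((t - s) ^ (-α)) ≤
      ENNReal.ofReal (δ ^ (-α)) * ∫⁻ s in Icc a t, Ψ s := by
    calc ∫⁻ s in Icc a (t - δ), Ψ s * ENNReal.ofReal ((t - s) ^ (-α))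
        ≤ ∫⁻ s in Icc a (t - δ), Ψ s * ENNReal.ofReal (δ ^ (-α)) := by
          refine setLIntegral_mono' measurableSet_Icc fun s hs => mul_le_mul_right ?_ _
          refine ENNReal.ofReal_le_ofReal ?_
          exact Real.rpow_le_rpow_of_nonpos hδ (by linarith [hs.2]) (neg_nonpos.2 hα0)
      _ ≤ (∫⁻ s in Icc a t, Ψ s) * ENNReal.ofReal (δ ^ (-α)) := by
          rw [lintegral_mul_const' _ _ ENNReal.ofReal_ne_top]
          exact mul_le_mul_left (lintegral_mono_set (Icc_subset_Icc_right (by linarith))) _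
      _ = _ := mul_comm _ _
  have hnear : ∫⁻ s in Icc (t - δ) t, Ψ s * ENNReal.ofReal ((t - s) ^ (-α)) ≤
      ENNReal.ofReal (δ ^ (1 - α) / (1 - α)) * Ψ t := by
    calc ∫⁻ s in Icc (t - δ) t, Ψ s * ENNReal.ofReal ((t - s) ^ (-α))
        ≤ ∫⁻ s in Icc (t - δ) t, Ψ t * ENNReal.ofReal ((t - s) ^ (-α)) :=
          setLIntegral_mono' measurableSet_Icc fun s hs => by gcongr; exact hΨ hs.2
      _ = _ := by
          rw [lintegral_const_mul _ (by fun_prop),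
            setLIntegral_Icc_rpow_neg_sub hα1 (by linarith), sub_sub_cancel, mul_comm]
  calc _ ≤ _ := lintegral_mono_set hsplit
    _ ≤ _ := lintegral_union_le _ _ _
    _ ≤ _ := add_le_add hfar hnear

lemma exists_setLIntegral_mul_rpow_neg_sub_le {α : ℝ} (hα0 : 0 ≤ α) (hα1 : α < 1) {ε : ℝ≥0∞}
    (hε : ε ≠ 0) :
    ∃ C : ℝ≥0∞, C ≠ ∞ ∧ ∀ Ψ : ℝ → ℝ≥0∞, Monotone Ψ → ∀ a t : ℝ,
      ∫⁻ s in Icc a t, Ψ s * ENNReal.ofReal ((t - s) ^ (-α)) ≤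
        C * (∫⁻ s in Icc a t, Ψ s) + ε * Ψ t := by
  have hcont : Tendsto (fun δ : ℝ => ENNReal.ofReal (δ ^ (1 - α) / (1 - α))) (𝓝[>] 0) (𝓝 0) := by
    have h := ((Real.continuous_rpow_const (sub_nonneg.2 hα1.le)).div_const (1 - α)).tendsto 0
    rw [Real.zero_rpow (by linarith), zero_div] at h
    simpa using (ENNReal.tendsto_ofReal h).mono_left nhdsWithin_le_nhds
  obtain ⟨δ, hδε, hδ⟩ :=
    ((hcont.eventually (gt_mem_nhds (pos_iff_ne_zero.2 hε))).and self_mem_nhdsWithin).exists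
  refine ⟨ENNReal.ofReal (δ ^ (-α)), ENNReal.ofReal_ne_top, fun Ψ hΨ a t => ?_⟩
  refine (setLIntegral_mul_rpow_neg_sub_le hΨ hα0 hα1 hδ a t).trans ?_
  gcongr

section Gronwall

variable {Ψ : ℝ → ℝ≥0∞} {a b W : ℝ≥0∞} {T : ℝ}

lemma mul_setLIntegral_Icc_ofReal_exp {β t : ℝ} (hβ : 0 ≤ β) (ht : 0 ≤ t) :
    ENNReal.ofReal β * ∫⁻ s in Icc 0 t, ENNReal.ofReal (Real.exp (β * s)) =
      ENNReal.ofReal (Real.exp (β * t) - 1) := by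
  rw [← lintegral_const_mul' _ _ ENNReal.ofReal_ne_top]
  simp_rw [← ENNReal.ofReal_mul hβ]
  rw [setLIntegral_Icc_ofReal_eq_sub ht (by fun_prop) (fun s _ => by positivity)
    (fun s => by simpa [mul_comm] using ((hasDerivAt_id s).const_mul β).exp)]
  simp

lemma mul_setLIntegral_Icc_ofReal_pow_div_factorial {β t : ℝ} (hβ : 0 ≤ β) (ht : 0 ≤ t) (n : ℕ) :
    ENNReal.ofReal β * ∫⁻ s in Icc 0 t, ENNReal.ofReal ((β * s) ^ n / n.factorial) =
      ENNReal.ofReal ((β * t) ^ (n + 1) / (n + 1).factorial) := by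
  have hderiv (s : ℝ) : HasDerivAt (fun s => (β * s) ^ (n + 1) / (n + 1).factorial)
      (β * ((β * s) ^ n / n.factorial)) s := by
    refine ((((hasDerivAt_id s).const_mul β).pow (n + 1)).div_const _).congr_deriv ?_
    rw [Nat.factorial_succ]
    push_cast
    field_simp
    rfl
  rw [← lintegral_const_mul' _ _ ENNReal.ofReal_ne_top]
  simp_rw [← ENNReal.ofReal_mul hβ]
  rw [setLIntegral_Icc_ofReal_eq_sub ht (by fun_prop)
    (fun s hs => by have := hs.1; positivity) hderiv]
  simp

lemma le_exp_add_pow_div_factorial_of_le_add_mul_lintegral (hb : b ≠ ∞)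
    (hΨW : ∀ t ∈ Icc 0 T, Ψ t ≤ W)
    (hrec : ∀ t ∈ Icc 0 T, Ψ t ≤ a + b * ∫⁻ s in Icc 0 t, Ψ s) (n : ℕ) :
    ∀ t ∈ Icc 0 T, Ψ t ≤ a * ENNReal.ofReal (Real.exp (b.toReal * t)) +
      W * ENNReal.ofReal ((b.toReal * t) ^ n / n.factorial) := by
  induction n with
  | zero =>
    intro t ht
    simpa using (hΨW t ht).trans le_add_self
  | succ n ih =>
    intro t ht
    have hbβ : b = ENNReal.ofReal b.toReal := (ENNReal.ofReal_toReal hb).symm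
    calc Ψ t ≤ a + b * ∫⁻ s in Icc 0 t, Ψ s := hrec t ht
      _ ≤ a + b * ∫⁻ s in Icc 0 t, (a * ENNReal.ofReal (Real.exp (b.toReal * s)) +
            W * ENNReal.ofReal ((b.toReal * s) ^ n / n.factorial)) := by
          gcongr a + b * ?_
          exact setLIntegral_mono' measurableSet_Icc fun s hs => ih s ⟨hs.1, hs.2.trans ht.2⟩
      _ = a + a * (b * ∫⁻ s in Icc 0 t, ENNReal.ofReal (Real.exp (b.toReal * s))) +
            W * (b * ∫⁻ s in Icc 0 t, ENNReal.ofReal ((b.toReal * s) ^ n / n.factorial)) := by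
          rw [lintegral_add_left (by fun_prop), lintegral_const_mul _ (by fun_prop),
            lintegral_const_mul _ (by fun_prop), mul_add, mul_left_comm b a, mul_left_comm b W,
            add_assoc]
      _ = a + a * ENNReal.ofReal (Real.exp (b.toReal * t) - 1) +
            W * ENNReal.ofReal ((b.toReal * t) ^ (n + 1) / (n + 1).factorial) := by
          rw [hbβ, ENNReal.toReal_ofReal ENNReal.toReal_nonneg,
            mul_setLIntegral_Icc_ofReal_exp ENNReal.toReal_nonneg ht.1,
            mul_setLIntegral_Icc_ofReal_pow_div_factorial ENNReal.toReal_nonneg ht.1 n]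
      _ = _ := by
          have hexp : 0 ≤ Real.exp (b.toReal * t) - 1 :=
            sub_nonneg.2 (Real.one_le_exp (mul_nonneg ENNReal.toReal_nonneg ht.1))
          have hsplit : ENNReal.ofReal (Real.exp (b.toReal * t)) =
              1 + ENNReal.ofReal (Real.exp (b.toReal * t) - 1) := by
            rw [← ENNReal.ofReal_one, ← ENNReal.ofReal_add zero_le_one hexp, add_sub_cancel]
          rw [hsplit]
          ring

lemma le_mul_exp_of_le_add_mul_lintegral (hW : W ≠ ∞) (hb : b ≠ ∞)
    (hΨW : ∀ t ∈ Icc 0 T, Ψ t ≤ W)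
    (hrec : ∀ t ∈ Icc 0 T, Ψ t ≤ a + b * ∫⁻ s in Icc 0 t, Ψ s) :
    ∀ t ∈ Icc 0 T, Ψ t ≤ a * ENNReal.ofReal (Real.exp (b.toReal * t)) := by
  intro t ht
  have hlim : Tendsto (fun n : ℕ => a * ENNReal.ofReal (Real.exp (b.toReal * t)) +
      W * ENNReal.ofReal ((b.toReal * t) ^ n / n.factorial)) atTop
      (𝓝 (a * ENNReal.ofReal (Real.exp (b.toReal * t)) + W * 0)) := by
    refine tendsto_const_nhds.add (ENNReal.Tendsto.const_mul ?_ (Or.inr hW))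
    simpa using (ENNReal.tendsto_ofReal
      (FloorSemiring.tendsto_pow_div_factorial_atTop (b.toReal * t)))
  simpa using ge_of_tendsto' hlim fun n =>
    le_exp_add_pow_div_factorial_of_le_add_mul_lintegral hb hΨW hrec n t ht

end Gronwall

section SliceSup

variable {X : Type*} {O : Set X} {f : ℝ → X → ℝ}

variable (O f) in
def sliceSup (s : ℝ) : ℝ≥0∞ := 1 + ⨆ q ∈ O, ‖f s q‖ₑ

variable (O f) in
def runningSqSup (t : ℝ) : ℝ≥0∞ := ⨆ s ∈ Icc (0 : ℝ) t, sliceSup O f s ^ 2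

lemma one_add_enorm_le_sliceSup {s : ℝ} {q : X} (hq : q ∈ O) :
    1 + ‖f s q‖ₑ ≤ sliceSup O f s :=
  add_le_add le_rfl (le_iSup₂ (f := fun q (_ : q ∈ O) => ‖f s q‖ₑ) q hq)

lemma enorm_le_ofReal_mul_sliceSup {K y : ℝ} {s : ℝ} {q : X} (hK : 0 ≤ K) (hq : q ∈ O)
    (hy : |y| ≤ K * (1 + |f s q|)) : ‖y‖ₑ ≤ ENNReal.ofReal K * sliceSup O f s := by
  calc ‖y‖ₑ ≤ ENNReal.ofReal (K * (1 + |f s q|)) := by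
        rw [Real.enorm_eq_ofReal_abs]; exact ENNReal.ofReal_le_ofReal hy
    _ = ENNReal.ofReal K * (1 + ‖f s q‖ₑ) := by
        rw [ENNReal.ofReal_mul hK, ENNReal.ofReal_add zero_le_one (abs_nonneg _),
          ENNReal.ofReal_one, Real.enorm_eq_ofReal_abs]
    _ ≤ ENNReal.ofReal K * sliceSup O f s := by gcongr; exact one_add_enorm_le_sliceSup hq

lemma sliceSup_sq_le_runningSqSup {s t : ℝ} (hs : 0 ≤ s) (hst : s ≤ t) :
    sliceSup O f s ^ 2 ≤ runningSqSup O f t :=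
  le_iSup₂ (f := fun s (_ : s ∈ Icc (0 : ℝ) t) => sliceSup O f s ^ 2) s ⟨hs, hst⟩

lemma monotone_runningSqSup : Monotone (runningSqSup O f) := fun _ _ h =>
  biSup_mono fun _ hs => ⟨hs.1, hs.2.trans h⟩

lemma runningSqSup_le_of_abs_le {T B t : ℝ} (hB : ∀ t ∈ Icc 0 T, ∀ r ∈ O, |f t r| ≤ B)
    (ht : t ≤ T) : runningSqSup O f t ≤ (1 + ENNReal.ofReal B) ^ 2 := by
  refine iSup₂_le fun s hs => ?_
  unfold sliceSup
  gcongr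
  refine iSup₂_le fun q hq => ?_
  rw [Real.enorm_eq_ofReal_abs]
  exact ENNReal.ofReal_le_ofReal (hB s ⟨hs.1, hs.2.trans ht⟩ q hq)

lemma sq_setLIntegral_sliceSup_le (t : ℝ) :
    (∫⁻ s in Icc 0 t, sliceSup O f s) ^ 2 ≤
      ENNReal.ofReal t * ∫⁻ s in Icc 0 t, runningSqSup O f s := by
  have hmeas : Measurable fun s => runningSqSup O f s ^ (2⁻¹ : ℝ) :=
    monotone_runningSqSup.measurable.pow_const _
  calc (∫⁻ s in Icc 0 t, sliceSup O f s) ^ 2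
      ≤ (∫⁻ s in Icc 0 t, runningSqSup O f s ^ (2⁻¹ : ℝ)) ^ 2 := by
        refine pow_le_pow_left' (setLIntegral_mono' measurableSet_Icc fun s hs => ?_) 2
        rw [← ENNReal.rpow_rpow_inv two_ne_zero (sliceSup O f s), ENNReal.rpow_two]
        gcongr
        exact sliceSup_sq_le_runningSqSup hs.1 le_rfl
    _ ≤ volume (Icc 0 t) * ∫⁻ s in Icc 0 t, (runningSqSup O f s ^ (2⁻¹ : ℝ)) ^ 2 := by
        simpa using sq_lintegral_le_measure_univ_mul (volume.restrict (Icc 0 t)) hmeas.aemeasurable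
    _ = ENNReal.ofReal t * ∫⁻ s in Icc 0 t, runningSqSup O f s := by
        simp_rw [Real.volume_Icc, sub_zero, ENNReal.rpow_inv_two_sq]

end SliceSup

lemma enorm_setIntegral_setIntegral_mul_le {Y Z : Type*} [MeasurableSpace Y] [MeasurableSpace Z]
    {μ : Measure Y} {ν : Measure Z} {S : Set Y} {O : Set Z} (hS : MeasurableSet S)
    (hO : MeasurableSet O) {k h : Y → Z → ℝ} {b : Y → ℝ≥0∞} {κ : ℝ≥0∞} (hκ : κ ≠ ∞)
    (hk : ∀ s, Measurable (k s)) (hk1 : ∀ s ∈ S, ∫⁻ q in O, ‖k s q‖ₑ ∂ν ≤ κ)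
    (hh : ∀ s ∈ S, ∀ q ∈ O, ‖h s q‖ₑ ≤ b s) :
    ‖∫ s in S, ∫ q in O, k s q * h s q ∂ν ∂μ‖ₑ ≤ κ * ∫⁻ s in S, b s ∂μ := by
  refine (enorm_integral_le_lintegral_enorm _).trans ?_
  rw [← lintegral_const_mul' _ _ hκ]
  refine setLIntegral_mono' hS fun s hs => (enorm_setIntegral_mul_le hO (hk s) (hh s hs)).trans ?_
  gcongr
  exact hk1 s hs

section VolterraKernel

variable {X : Type*} {O : Set X} {T K α : ℝ} {G : ℝ → ℝ → X → X → ℝ}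

lemma enorm_kernel_le (hGzero : ∀ t s : ℝ, t ≤ s → ∀ r q : X, G t s r q = 0)
    (hG2 : ∀ s t : ℝ, 0 ≤ s → s < t → t ≤ T → ∀ r ∈ O, ∀ q ∈ O,
      |G t s r q| ≤ K * (t - s) ^ (-α))
    {s t : ℝ} (hs : s ∈ Icc 0 t) (ht : t ≤ T) {r q : X} (hr : r ∈ O) (hq : q ∈ O) :
    ‖G t s r q‖ₑ ≤ ENNReal.ofReal (K * (t - s) ^ (-α)) := by
  rcases hs.2.eq_or_lt with rfl | hlt
  · simp [hGzero s s le_rfl r q]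
  · rw [Real.enorm_eq_ofReal_abs]
    exact ENNReal.ofReal_le_ofReal (hG2 s t hs.1 hlt ht r hr q hq)

lemma setLIntegral_setLIntegral_enorm_kernel_mul_sq_le [MeasurableSpace X] {ν : Measure X}
    (hO : MeasurableSet O) (hK : 0 ≤ K) (hGs : ∀ t s r, Measurable (G t s r))
    (hGzero : ∀ t s : ℝ, t ≤ s → ∀ r q : X, G t s r q = 0)
    (hG1 : ∀ t ∈ Icc (0:ℝ) T, ∀ s ∈ Icc (0:ℝ) T, ∀ r ∈ O,
      ∫⁻ q in O, ‖G t s r q‖ₑ ∂ν ≤ ENNReal.ofReal K)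
    (hG2 : ∀ s t : ℝ, 0 ≤ s → s < t → t ≤ T → ∀ r ∈ O, ∀ q ∈ O,
      |G t s r q| ≤ K * (t - s) ^ (-α))
    {h : ℝ → X → ℝ} {b : ℝ → ℝ≥0∞} {t : ℝ} {r : X} (ht : t ∈ Icc 0 T) (hr : r ∈ O)
    (hh : ∀ s ∈ Icc 0 t, ∀ q ∈ O, ‖h s q‖ₑ ≤ ENNReal.ofReal K * b s) :
    ∫⁻ s in Icc 0 t, ∫⁻ q in O, ‖G t s r q * h s q‖ₑ ^ 2 ∂ν ≤
      ENNReal.ofReal K ^ 4 * ∫⁻ s in Icc 0 t, b s ^ 2 * ENNReal.ofReal ((t - s) ^ (-α)) := by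
  rw [← lintegral_const_mul' _ _ (by finiteness)]
  refine setLIntegral_mono' measurableSet_Icc fun s hs => ?_
  simp_rw [enorm_mul]
  calc ∫⁻ q in O, (‖G t s r q‖ₑ * ‖h s q‖ₑ) ^ 2 ∂ν
      ≤ ENNReal.ofReal (K * (t - s) ^ (-α)) * (∫⁻ q in O, ‖G t s r q‖ₑ ∂ν) *
          (ENNReal.ofReal K * b s) ^ 2 :=
        setLIntegral_sq_mul_le hO (hGs t s r).enorm
          (fun q hq => enorm_kernel_le hGzero hG2 hs ht.2 hr hq) (hh s hs)
    _ ≤ ENNReal.ofReal (K * (t - s) ^ (-α)) * ENNReal.ofReal K * (ENNReal.ofReal K * b s) ^ 2 := by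
        gcongr
        exact hG1 t ht s ⟨hs.1, hs.2.trans ht.2⟩ r hr
    _ = ENNReal.ofReal K ^ 4 * (b s ^ 2 * ENNReal.ofReal ((t - s) ^ (-α))) := by
        rw [ENNReal.ofReal_mul hK]
        ring

end VolterraKernel

section ControlledEquation

variable {d : ℕ} {O : Set (Euc d)} {T K α C₀ M : ℝ} {G : ℝ → ℝ → Euc d → Euc d → ℝ}
  {R F : ℝ → Euc d → ℝ → ℝ} {x : Euc d → ℝ} {u f : ℝ → Euc d → ℝ}

lemma enorm_le_of_solvesCE (hO : MeasurableSet O) (hK : 0 ≤ K)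
    (hGmeas : Measurable fun p : (ℝ × ℝ) × Euc d × Euc d => G p.1.1 p.1.2 p.2.1 p.2.2)
    (hGzero : ∀ t s : ℝ, t ≤ s → ∀ r q : Euc d, G t s r q = 0)
    (hG1 : ∀ t ∈ Icc (0:ℝ) T, ∀ s ∈ Icc (0:ℝ) T, ∀ r ∈ O,
      ∫⁻ q in O, ‖G t s r q‖ₑ ≤ ENNReal.ofReal K)
    (hG2 : ∀ s t : ℝ, 0 ≤ s → s < t → t ≤ T → ∀ r ∈ O, ∀ q ∈ O,
      |G t s r q| ≤ K * (t - s) ^ (-α))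
    (hFmeas : Measurable fun p : ℝ × Euc d × ℝ => F p.1 p.2.1 p.2.2)
    (hGrowth : ∀ t ∈ Icc (0:ℝ) T, ∀ r ∈ O, ∀ x : ℝ, |R t r x| + |F t r x| ≤ K * (1 + |x|))
    (hx : ∀ r ∈ O, |x r| ≤ C₀) (hu : MemL2 O T u) (hMen : energy O T u ≤ ENNReal.ofReal M)
    (hfm : Measurable fun p : ℝ × Euc d => f p.1 p.2) (hCE : SolvesCE O T G R F x u f)
    {t : ℝ} (ht : t ∈ Icc 0 T) {r : Euc d} (hr : r ∈ O) :
    ‖f t r‖ₑ ≤ ENNReal.ofReal K * ENNReal.ofReal C₀ +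
      ENNReal.ofReal K ^ 2 * (∫⁻ s in Icc 0 t, sliceSup O f s) +
      (ENNReal.ofReal K ^ 4 *
        (∫⁻ s in Icc 0 t, runningSqSup O f s * ENNReal.ofReal ((t - s) ^ (-α))) *
          ENNReal.ofReal M) ^ (2⁻¹ : ℝ) := by
  have hGs : ∀ t s r, Measurable (G t s r) := fun t s r =>
    hGmeas.comp (f := fun q => ((t, s), (r, q))) (by fun_prop)
  have hGF : Measurable fun p : ℝ × Euc d => G t p.1 r p.2 * F p.1 p.2 (f p.1 p.2) :=
    (hGmeas.comp (f := fun p : ℝ × Euc d => ((t, p.1), (r, p.2))) (by fun_prop)).mul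
      (hFmeas.comp (f := fun p : ℝ × Euc d => (p.1, p.2, f p.1 p.2))
        (measurable_fst.prodMk (measurable_snd.prodMk hfm)))
  have hsT {s : ℝ} (hs : s ∈ Icc 0 t) : s ∈ Icc 0 T := ⟨hs.1, hs.2.trans ht.2⟩
  have hgrowth {s : ℝ} (hs : s ∈ Icc 0 t) {q : Euc d} (hq : q ∈ O) :
      ‖R s q (f s q)‖ₑ ≤ ENNReal.ofReal K * sliceSup O f s ∧
        ‖F s q (f s q)‖ₑ ≤ ENNReal.ofReal K * sliceSup O f s :=
    ⟨enorm_le_ofReal_mul_sliceSup hK hq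
      ((le_add_of_nonneg_right (abs_nonneg _)).trans (hGrowth s (hsT hs) q hq _)),
     enorm_le_ofReal_mul_sliceSup hK hq
      ((le_add_of_nonneg_left (abs_nonneg _)).trans (hGrowth s (hsT hs) q hq _))⟩
  have hprod : (volume.restrict (Icc 0 t)).prod (volume.restrict O) ≤
      (volume.restrict (Icc 0 T)).prod (volume.restrict O) := by
    rw [Measure.prod_restrict, Measure.prod_restrict]
    exact Measure.restrict_mono (prod_mono (Icc_subset_Icc_right ht.2) subset_rfl) le_rfl
  rw [hCE t ht r hr]
  refine (enorm_add_le _ _).trans (add_le_add ((enorm_add_le _ _).trans (add_le_add ?_ ?_)) ?_)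
  · calc _ ≤ (∫⁻ q in O, ‖G t 0 r q‖ₑ) * ENNReal.ofReal C₀ :=
          enorm_setIntegral_mul_le hO (hGs t 0 r) fun q hq => by
            rw [Real.enorm_eq_ofReal_abs]; exact ENNReal.ofReal_le_ofReal (hx q hq)
      _ ≤ _ := by gcongr; exact hG1 t ht 0 ⟨le_rfl, ht.1.trans ht.2⟩ r hr
  · calc _ ≤ ENNReal.ofReal K * ∫⁻ s in Icc 0 t, ENNReal.ofReal K * sliceSup O f s :=
          enorm_setIntegral_setIntegral_mul_le measurableSet_Icc hO ENNReal.ofReal_ne_top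
            (fun s => hGs t s r) (fun s hs => hG1 t ht s (hsT hs) r hr)
            fun s hs q hq => (hgrowth hs hq).1
      _ = _ := by rw [lintegral_const_mul' _ _ ENNReal.ofReal_ne_top, ← mul_assoc, sq]
  · rw [← ENNReal.rpow_rpow_inv two_ne_zero ‖_‖ₑ, ENNReal.rpow_two]
    gcongr
    refine (enorm_integral_integral_mul_sq_le hGF.enorm.aemeasurable
      ((hu.1.mono_measure hprod).enorm)).trans ?_
    gcongr
    · refine (setLIntegral_setLIntegral_enorm_kernel_mul_sq_le hO hK hGs hGzero hG1 hG2 ht hr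
        fun s hs q hq => (hgrowth hs hq).2).trans ?_
      refine mul_le_mul_right (setLIntegral_mono' measurableSet_Icc fun s hs => ?_) _
      exact mul_le_mul_left (sliceSup_sq_le_runningSqSup hs.1 le_rfl) _
    · exact (lintegral_mono_set (Icc_subset_Icc_right ht.2)).trans hMen

end ControlledEquation

section Absorption

variable {X : Type*} {O : Set X} {f : ℝ → X → ℝ}

lemma sliceSup_sq_le_of_enorm_le {A B Z : ℝ≥0∞} {t T : ℝ} (ht : t ∈ Icc 0 T)
    (h : ∀ r ∈ O, ‖f t r‖ₑ ≤ A + B * (∫⁻ s in Icc 0 t, sliceSup O f s) + Z ^ (2⁻¹ : ℝ)) :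
    sliceSup O f t ^ 2 ≤
      3 * (1 + A) ^ 2 + 3 * B ^ 2 * ENNReal.ofReal T * (∫⁻ s in Icc 0 t, runningSqSup O f s) +
        3 * Z := by
  have hsup : sliceSup O f t ≤ (1 + A) + B * (∫⁻ s in Icc 0 t, sliceSup O f s) + Z ^ (2⁻¹ : ℝ) := by
    rw [sliceSup, add_assoc 1 A, add_assoc 1]
    gcongr
    exact iSup₂_le h
  calc sliceSup O f t ^ 2
      ≤ 3 * ((1 + A) ^ 2 + B ^ 2 * (∫⁻ s in Icc 0 t, sliceSup O f s) ^ 2 +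
          (Z ^ (2⁻¹ : ℝ)) ^ 2) := by
        rw [← mul_pow]
        exact (pow_le_pow_left' hsup 2).trans (add_add_sq_le_three_mul _ _ _)
    _ ≤ 3 * ((1 + A) ^ 2 + B ^ 2 * (ENNReal.ofReal T * ∫⁻ s in Icc 0 t, runningSqSup O f s) +
          Z) := by
        rw [ENNReal.rpow_inv_two_sq]
        gcongr
        exact (sq_setLIntegral_sliceSup_le t).trans (by gcongr; exact ht.2)
    _ = _ := by ring

lemma le_two_mul_of_le_add_inv_two_mul {x y : ℝ≥0∞} (hx : x ≠ ∞) (h : x ≤ y + 2⁻¹ * x) :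
    x ≤ 2 * y := by
  have hhalf : 2⁻¹ * x ≤ y := by
    have h2 : 2⁻¹ * x + 2⁻¹ * x ≤ y + 2⁻¹ * x := by
      rwa [← add_mul, ENNReal.inv_two_add_inv_two, one_mul]
    exact (ENNReal.add_le_add_iff_right (by finiteness)).1 h2
  calc x = 2 * (2⁻¹ * x) := by
        rw [← mul_assoc, ENNReal.mul_inv_cancel two_ne_zero ENNReal.ofNat_ne_top, one_mul]
    _ ≤ 2 * y := by gcongr

lemma runningSqSup_le_of_sliceSup_sq_le {a b c C ε : ℝ≥0∞} {α T : ℝ}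
    (hfin : ∀ t ∈ Icc 0 T, runningSqSup O f t ≠ ∞) (hεc : ε * c ≤ 2⁻¹)
    (hsing : ∀ t, ∫⁻ s in Icc 0 t, runningSqSup O f s * ENNReal.ofReal ((t - s) ^ (-α)) ≤
      C * (∫⁻ s in Icc 0 t, runningSqSup O f s) + ε * runningSqSup O f t)
    (h : ∀ t ∈ Icc 0 T, sliceSup O f t ^ 2 ≤ a + b * (∫⁻ s in Icc 0 t, runningSqSup O f s) +
      c * ∫⁻ s in Icc 0 t, runningSqSup O f s * ENNReal.ofReal ((t - s) ^ (-α))) :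
    ∀ t ∈ Icc 0 T,
      runningSqSup O f t ≤ 2 * a + 2 * (b + c * C) * ∫⁻ s in Icc 0 t, runningSqSup O f s := by
  intro t ht
  rw [mul_assoc, ← mul_add]
  refine le_two_mul_of_le_add_inv_two_mul (hfin t ht) (iSup₂_le fun s hs => ?_)
  calc sliceSup O f s ^ 2
      ≤ a + b * (∫⁻ s in Icc 0 s, runningSqSup O f s) +
          c * (C * (∫⁻ s in Icc 0 s, runningSqSup O f s) + ε * runningSqSup O f s) :=
        (h s ⟨hs.1, hs.2.trans ht.2⟩).trans (by gcongr; exact hsing s)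
    _ = a + (b + c * C) * (∫⁻ s in Icc 0 s, runningSqSup O f s) +
          ε * c * runningSqSup O f s := by ring
    _ ≤ a + (b + c * C) * (∫⁻ s in Icc 0 t, runningSqSup O f s) + 2⁻¹ * runningSqSup O f t := by
        gcongr a + (b + c * C) * ?_ + ?_ * ?_
        · exact lintegral_mono_set (Icc_subset_Icc_right hs.2)
        · exact monotone_runningSqSup hs.2

end Absorption

theorem stmt_12_general
    {d : ℕ} (O : Set (Euc d)) (hOopen : IsOpen O)
    (T K γ : ℝ) (hK : 0 < K) (hγ : (d : ℝ) < γ)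
    (G : ℝ → ℝ → Euc d → Euc d → ℝ)
    (hGmeas : Measurable fun p : (ℝ × ℝ) × Euc d × Euc d => G p.1.1 p.1.2 p.2.1 p.2.2)
    (hGzero : ∀ t s : ℝ, t ≤ s → ∀ r q : Euc d, G t s r q = 0)
    (hG1 : ∀ t ∈ Icc (0:ℝ) T, ∀ s ∈ Icc (0:ℝ) T, ∀ r ∈ O,
      (∫⁻ q in O, (‖G t s r q‖₊ : ℝ≥0∞)) ≤ ENNReal.ofReal K)
    (hG2 : ∀ s t : ℝ, 0 ≤ s → s < t → t ≤ T → ∀ r ∈ O, ∀ q ∈ O,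
      |G t s r q| ≤ K * (t - s) ^ (-(d : ℝ) / γ))
    (R F : ℝ → Euc d → ℝ → ℝ)
    (hFmeas : Measurable fun p : ℝ × Euc d × ℝ => F p.1 p.2.1 p.2.2)
    (hGrowth : ∀ t ∈ Icc (0:ℝ) T, ∀ r ∈ O, ∀ x : ℝ,
      |R t r x| + |F t r x| ≤ K * (1 + |x|)) :
    ∀ C₀ M : ℝ, ∃ C : ℝ,
      ∀ (x : Euc d → ℝ) (u : ℝ → Euc d → ℝ) (f : ℝ → Euc d → ℝ),
        Measurable x → (∀ r ∈ O, |x r| ≤ C₀) →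
        MemL2 O T u → energy O T u ≤ ENNReal.ofReal M →
        (Measurable fun p : ℝ × Euc d => f p.1 p.2) →
        (∃ B : ℝ, ∀ t ∈ Icc (0:ℝ) T, ∀ r ∈ O, |f t r| ≤ B) →
        SolvesCE O T G R F x u f →
        ∀ t ∈ Icc (0:ℝ) T, ∀ r ∈ O, |f t r| ≤ C := by
  intro C₀ M
  have hα0 : 0 ≤ (d : ℝ) / γ := div_nonneg d.cast_nonneg (d.cast_nonneg.trans hγ.le)
  have hα1 : (d : ℝ) / γ < 1 := (div_lt_one (d.cast_nonneg.trans_lt hγ)).2 hγ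
  simp_rw [neg_div] at hG2
  set κ := ENNReal.ofReal K
  -- `c` multiplies the singular integral, and `ε * c < 1/2` lets its `Ψ(t)` part be absorbed.
  set c := 3 * κ ^ 4 * ENNReal.ofReal M
  obtain ⟨ε, hε0, hεc⟩ := ENNReal.exists_nnreal_pos_mul_lt (a := c) (by finiteness)
    (b := 2⁻¹) (by norm_num)
  obtain ⟨Cδ, hCδ, hsing⟩ :=
    exists_setLIntegral_mul_rpow_neg_sub_le hα0 hα1 (ENNReal.coe_ne_zero.2 hε0.ne')
  set a := 3 * (1 + κ * ENNReal.ofReal C₀) ^ 2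
  set b := 3 * (κ ^ 2) ^ 2 * ENNReal.ofReal T
  refine ⟨√(2 * a * ENNReal.ofReal (Real.exp ((2 * (b + c * Cδ)).toReal * T))).toReal, ?_⟩
  rintro x u f - hx hu hMen hfm ⟨B, hB⟩ hCE t ht r hr
  have hbdd (t : ℝ) (ht : t ∈ Icc 0 T) := runningSqSup_le_of_abs_le hB ht.2
  have hsq (t : ℝ) (ht : t ∈ Icc 0 T) := sliceSup_sq_le_of_enorm_le ht fun r hr =>
    enorm_le_of_solvesCE hOopen.measurableSet hK.le hGmeas hGzero hG1 hG2 hFmeas hGrowth hx hu hMen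
      hfm hCE ht hr
  have hrec := runningSqSup_le_of_sliceSup_sq_le (a := a) (b := b)
    (fun t ht => ne_top_of_le_ne_top (by finiteness) (hbdd t ht)) hεc.le
    (fun t => hsing _ monotone_runningSqSup 0 t) fun t ht => (hsq t ht).trans_eq (by ring)
  have hgron := le_mul_exp_of_le_add_mul_lintegral (by finiteness) (by finiteness) hbdd hrec
  refine abs_le_sqrt_toReal_of_enorm_sq_le (by finiteness) ?_
  calc ‖f t r‖ₑ ^ 2 ≤ sliceSup O f t ^ 2 := by
        gcongr; exact le_add_self.trans (one_add_enorm_le_sliceSup hr)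
    _ ≤ runningSqSup O f t := sliceSup_sq_le_runningSqSup ht.1 le_rfl
    _ ≤ 2 * a * ENNReal.ofReal (Real.exp ((2 * (b + c * Cδ)).toReal * t)) := hgron t ht
    _ ≤ _ := by gcongr; exact ht.2

/-- **Uniform bound on bounded solutions of the controlled equation (CE).**
For every `C₀ < ∞` and `M < ∞` there is a constant `C < ∞` such that every
bounded measurable solution `f` of (CE) with data `(x,u)` where
`sup_O |x| ≤ C₀` and `∫_{[0,T]×O} u² ≤ M` satisfies
`sup_{[0,T]×O} |f| ≤ C`. -/
theorem stmt_12
    {d : ℕ} (O : Set (Euc d)) (hOopen : IsOpen O) (hObdd : Bornology.IsBounded O)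
    (T K γ : ℝ) (hT : 0 < T) (hK : 0 < K) (hγ : (d : ℝ) < γ)
    (G : ℝ → ℝ → Euc d → Euc d → ℝ)
    (hGmeas : Measurable fun p : (ℝ × ℝ) × Euc d × Euc d => G p.1.1 p.1.2 p.2.1 p.2.2)
    (hGzero : ∀ t s : ℝ, t ≤ s → ∀ r q : Euc d, G t s r q = 0)
    (hG1 : ∀ t ∈ Icc (0:ℝ) T, ∀ s ∈ Icc (0:ℝ) T, ∀ r ∈ O,
      (∫⁻ q in O, (‖G t s r q‖₊ : ℝ≥0∞)) ≤ ENNReal.ofReal K)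
    (hG2 : ∀ s t : ℝ, 0 ≤ s → s < t → t ≤ T → ∀ r ∈ O, ∀ q ∈ O,
      |G t s r q| ≤ K * (t - s) ^ (-(d : ℝ) / γ))
    (R F : ℝ → Euc d → ℝ → ℝ)
    (hRmeas : Measurable fun p : ℝ × Euc d × ℝ => R p.1 p.2.1 p.2.2)
    (hFmeas : Measurable fun p : ℝ × Euc d × ℝ => F p.1 p.2.1 p.2.2)
    (hLip : ∀ t ∈ Icc (0:ℝ) T, ∀ r ∈ O, ∀ x y : ℝ,
      |R t r x - R t r y| + |F t r x - F t r y| ≤ K * |x - y|)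
    (hGrowth : ∀ t ∈ Icc (0:ℝ) T, ∀ r ∈ O, ∀ x : ℝ,
      |R t r x| + |F t r x| ≤ K * (1 + |x|)) :
    ∀ C₀ M : ℝ, ∃ C : ℝ,
      ∀ (x : Euc d → ℝ) (u : ℝ → Euc d → ℝ) (f : ℝ → Euc d → ℝ),
        Measurable x → (∀ r ∈ O, |x r| ≤ C₀) →
        MemL2 O T u → energy O T u ≤ ENNReal.ofReal M →
        (Measurable fun p : ℝ × Euc d => f p.1 p.2) →
        (∃ B : ℝ, ∀ t ∈ Icc (0:ℝ) T, ∀ r ∈ O, |f t r| ≤ B) →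
        SolvesCE O T G R F x u f →
        ∀ t ∈ Icc (0:ℝ) T, ∀ r ∈ O, |f t r| ≤ C :=
  stmt_12_general O hOopen T K γ hK hγ G hGmeas hGzero hG1 hG2 R F hFmeas hGrowth

end
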